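/- arXiv:1109.6560 — 2 statements merged into one kernel-verified Lean document; each statement's English description precedes it below -/
import Mathlib

section
/- The Rogers–Fine identity: for |q|<1 and |t|<1, ∑_{n≥0} (a;q)_n/(b;q)_n · t^n = ∑_{n≥0} (a;q)_n (atq/b;q)_n b^n t^n q^{n²−n} (1 − a t q^{2n}) / ((b;q)_n (t;q)_{n+1}). -/
noncomputable def qPoch (a q : ℂ) (n : ℕ) : ℂ :=
  ∏ j ∈ Finset.range n, (1 - a * q ^ j)

lemma qPoch_succ (a q : ℂ) (n : ℕ) : qPoch a q (n+1) = qPoch a q n * (1 - a * q ^ n) :=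
  Finset.prod_range_succ _ _

lemma qPoch_succ' (a q : ℂ) (n : ℕ) : qPoch a q (n+1) = (1 - a) * qPoch (a*q) q n := by
  rw [qPoch, Finset.prod_range_succ']
  simp only [pow_zero, mul_one]
  rw [mul_comm]
  congr 1
  exact Finset.prod_congr rfl (fun j _ => by ring_nf)

lemma qPoch_ne_zero (b q : ℂ) (hb1 : ∀ m : ℕ, b * q ^ m ≠ 1) (n : ℕ) : qPoch b q n ≠ 0 := by
  rw [qPoch, Finset.prod_ne_zero_iff]
  exact fun m _ h => hb1 m (by rwa [sub_eq_zero, eq_comm] at h)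

lemma qPoch_norm_le (c q : ℂ) (R : ℝ) (hq : ‖q‖ < 1) (hc : ‖c‖ ≤ R) (n : ℕ) :
    ‖qPoch c q n‖ ≤ Real.exp (R / (1 - ‖q‖)) := by
  have hq0 : (0:ℝ) ≤ ‖q‖ := norm_nonneg q
  have h1q : (0:ℝ) < 1 - ‖q‖ := by linarith
  rw [qPoch, norm_prod]
  calc ∏ j ∈ Finset.range n, ‖1 - c * q ^ j‖
      ≤ ∏ j ∈ Finset.range n, Real.exp (R * ‖q‖ ^ j) := by
        apply Finset.prod_le_prod (fun j _ => norm_nonneg _)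
        intro j _
        calc ‖1 - c * q ^ j‖ ≤ ‖(1:ℂ)‖ + ‖c * q ^ j‖ := norm_sub_le _ _
          _ = 1 + ‖c‖ * ‖q‖ ^ j := by rw [norm_one, norm_mul, norm_pow]
          _ ≤ 1 + R * ‖q‖ ^ j := by
              have := pow_nonneg hq0 j
              nlinarith
          _ ≤ Real.exp (R * ‖q‖ ^ j) := by
              have := Real.add_one_le_exp (R * ‖q‖ ^ j); linarith
    _ = Real.exp (∑ j ∈ Finset.range n, R * ‖q‖ ^ j) := (Real.exp_sum _ _).symm
    _ ≤ Real.exp (R / (1 - ‖q‖)) := by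
        apply Real.exp_le_exp.2
        rw [← Finset.mul_sum, div_eq_mul_inv]
        have hR : (0:ℝ) ≤ R := le_trans (norm_nonneg c) hc
        apply mul_le_mul_of_nonneg_left _ hR
        calc ∑ j ∈ Finset.range n, ‖q‖ ^ j ≤ ∑' j : ℕ, ‖q‖ ^ j :=
              Summable.sum_le_tsum _ (fun i _ => pow_nonneg hq0 i) (summable_geometric_of_lt_one hq0 hq)
          _ = (1 - ‖q‖)⁻¹ := tsum_geometric_of_lt_one hq0 hq

lemma exp_neg_le_one_sub {x : ℝ} (h0 : 0 ≤ x) (h : x ≤ 1/2) : Real.exp (-(2*x)) ≤ 1 - x := by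
  have h1 : 1 + 2*x ≤ Real.exp (2*x) := by have := Real.add_one_le_exp (2*x); linarith
  have h2 : Real.exp (-(2*x)) * Real.exp (2*x) = 1 := by
    rw [← Real.exp_add]; ring_nf; exact Real.exp_zero
  have h3 : 0 < Real.exp (-(2*x)) := Real.exp_pos _
  nlinarith [h3, mul_le_mul_of_nonneg_left h1 (le_of_lt h3)]

lemma prod_norm_lower (b q : ℂ) (hq : ‖q‖ < 1) (hb1 : ∀ m : ℕ, b * q ^ m ≠ 1) :
    ∃ δ : ℝ, 0 < δ ∧ ∀ S : Finset ℕ, δ ≤ ∏ m ∈ S, ‖1 - b * q ^ m‖ := by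
  have hq0 : (0:ℝ) ≤ ‖q‖ := norm_nonneg q
  have h1q : (0:ℝ) < 1 - ‖q‖ := by linarith
  have htend : Filter.Tendsto (fun m : ℕ => ‖b‖ * ‖q‖ ^ m) Filter.atTop (nhds 0) := by
    have := (tendsto_pow_atTop_nhds_zero_of_lt_one hq0 hq).const_mul ‖b‖
    simpa using this
  have hev : ∀ᶠ m in Filter.atTop, ‖b‖ * ‖q‖ ^ m ≤ 1/2 :=
    htend.eventually_le_const (by norm_num)
  obtain ⟨M, hM⟩ := Filter.eventually_atTop.1 hev
  set E := Real.exp (-(2 * (‖b‖ / (1 - ‖q‖)))) with hE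
  set P := ∏ m ∈ Finset.range M, min 1 ‖1 - b * q ^ m‖ with hP
  have hfactor_pos : ∀ m : ℕ, 0 < ‖1 - b * q ^ m‖ := by
    intro m
    rw [norm_pos_iff]
    exact sub_ne_zero.2 (fun h => hb1 m h.symm)
  have hmin_nonneg : ∀ m : ℕ, (0:ℝ) ≤ min 1 ‖1 - b * q ^ m‖ :=
    fun m => le_min zero_le_one (hfactor_pos m).le
  have hPpos : 0 < P := Finset.prod_pos (fun m _ => lt_min one_pos (hfactor_pos m))
  refine ⟨P * E, mul_pos hPpos (Real.exp_pos _), fun S => ?_⟩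
  rw [← Finset.prod_inter_mul_prod_diff S (Finset.range M)]
  have b1 : P ≤ ∏ m ∈ S ∩ Finset.range M, ‖1 - b * q ^ m‖ := by
    have hsplit : P = (∏ m ∈ Finset.range M ∩ S, min 1 ‖1 - b * q ^ m‖)
        * ∏ m ∈ Finset.range M \ S, min 1 ‖1 - b * q ^ m‖ :=
      (Finset.prod_inter_mul_prod_diff (Finset.range M) S _).symm
    have h2 : (∏ m ∈ Finset.range M \ S, min 1 ‖1 - b * q ^ m‖) ≤ 1 :=
      Finset.prod_le_one (fun i _ => hmin_nonneg i) (fun i _ => min_le_left _ _)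
    have h3 : (∏ m ∈ Finset.range M ∩ S, min 1 ‖1 - b * q ^ m‖) ≤
        ∏ m ∈ S ∩ Finset.range M, ‖1 - b * q ^ m‖ := by
      rw [Finset.inter_comm]
      exact Finset.prod_le_prod (fun i _ => hmin_nonneg i) (fun i _ => min_le_right _ _)
    have h4 : (0:ℝ) ≤ ∏ m ∈ Finset.range M ∩ S, min 1 ‖1 - b * q ^ m‖ :=
      Finset.prod_nonneg (fun i _ => hmin_nonneg i)
    have h5 : (0:ℝ) ≤ ∏ m ∈ Finset.range M \ S, min 1 ‖1 - b * q ^ m‖ :=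
      Finset.prod_nonneg (fun i _ => hmin_nonneg i)
    calc P = _ := hsplit
      _ ≤ ∏ m ∈ Finset.range M ∩ S, min 1 ‖1 - b * q ^ m‖ :=
          mul_le_of_le_one_right h4 h2
      _ ≤ _ := h3
  have b2 : E ≤ ∏ m ∈ S \ Finset.range M, ‖1 - b * q ^ m‖ := by
    have hsum : ∑ m ∈ S \ Finset.range M, ‖q‖ ^ m ≤ (1 - ‖q‖)⁻¹ := by
      calc ∑ m ∈ S \ Finset.range M, ‖q‖ ^ m ≤ ∑' m : ℕ, ‖q‖ ^ m :=
            Summable.sum_le_tsum _ (fun i _ => pow_nonneg hq0 i) (summable_geometric_of_lt_one hq0 hq)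
        _ = (1 - ‖q‖)⁻¹ := tsum_geometric_of_lt_one hq0 hq
    have hsum0 : (0:ℝ) ≤ ∑ m ∈ S \ Finset.range M, ‖q‖ ^ m :=
      Finset.sum_nonneg (fun i _ => pow_nonneg hq0 i)
    calc E ≤ ∏ m ∈ S \ Finset.range M, Real.exp (-(2 * (‖b‖ * ‖q‖ ^ m))) := by
          rw [← Real.exp_sum]
          apply Real.exp_le_exp.2
          have heq : ∑ m ∈ S \ Finset.range M, -(2 * (‖b‖ * ‖q‖ ^ m))
              = -(2 * ‖b‖) * ∑ m ∈ S \ Finset.range M, ‖q‖ ^ m := by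
            rw [Finset.mul_sum]
            exact Finset.sum_congr rfl (fun i _ => by ring)
          rw [heq]
          have hbn : (0:ℝ) ≤ ‖b‖ := norm_nonneg b
          have := mul_le_mul_of_nonneg_left hsum (by linarith : (0:ℝ) ≤ 2 * ‖b‖)
          rw [div_eq_mul_inv]
          nlinarith
      _ ≤ ∏ m ∈ S \ Finset.range M, ‖1 - b * q ^ m‖ := by
          apply Finset.prod_le_prod (fun i _ => (Real.exp_pos _).le)
          intro m hm
          have hmM : M ≤ m := by
            rcases Finset.mem_sdiff.1 hm with ⟨_, h2⟩
            by_contra hlt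
            exact h2 (Finset.mem_range.2 (lt_of_not_ge hlt))
          have hx : ‖b‖ * ‖q‖ ^ m ≤ 1/2 := hM m hmM
          have hx0 : 0 ≤ ‖b‖ * ‖q‖ ^ m := mul_nonneg (norm_nonneg _) (pow_nonneg hq0 _)
          calc Real.exp (-(2 * (‖b‖ * ‖q‖ ^ m))) ≤ 1 - ‖b‖ * ‖q‖ ^ m :=
                exp_neg_le_one_sub hx0 hx
            _ ≤ ‖1 - b * q ^ m‖ := by
                have := norm_sub_norm_le (1 : ℂ) (b * q ^ m)
                rw [norm_one, norm_mul, norm_pow] at this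
                linarith
  calc P * E ≤ (∏ m ∈ S ∩ Finset.range M, ‖1 - b * q ^ m‖) * ∏ m ∈ S \ Finset.range M, ‖1 - b * q ^ m‖ :=
        mul_le_mul b1 b2 (Real.exp_pos _).le (Finset.prod_nonneg (fun i _ => (hfactor_pos i).le))
    _ = _ := rfl

lemma qPoch_shift_norm_lower (b q : ℂ) (δ : ℝ)
    (hδ : ∀ S : Finset ℕ, δ ≤ ∏ m ∈ S, ‖1 - b * q ^ m‖) (N n : ℕ) :
    δ ≤ ‖qPoch (b * q ^ N) q n‖ := by
  have heq : qPoch (b * q ^ N) q n = ∏ j ∈ Finset.range n, (1 - b * q ^ (N + j)) := by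
    rw [qPoch]
    exact Finset.prod_congr rfl (fun j _ => by rw [pow_add]; ring_nf)
  rw [heq, norm_prod]
  have himg : ∏ j ∈ Finset.range n, ‖1 - b * q ^ (N + j)‖
      = ∏ m ∈ (Finset.range n).image (fun j => N + j), ‖1 - b * q ^ m‖ := by
    rw [Finset.prod_image (fun x _ y _ h => by omega)]
  rw [himg]
  exact hδ _

noncomputable def Fq (a b t q : ℂ) : ℂ := ∑' n : ℕ, qPoch a q n / qPoch b q n * t ^ n

lemma F_term_bound (a b t q : ℂ) (K δ : ℝ) (hδ : 0 < δ)
    (hK : ∀ n, ‖qPoch a q n‖ ≤ K) (hlow : ∀ n, δ ≤ ‖qPoch b q n‖) (n : ℕ) :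
    ‖qPoch a q n / qPoch b q n * t ^ n‖ ≤ (K / δ) * ‖t‖ ^ n := by
  rw [norm_mul, norm_div, norm_pow]
  have h1 : ‖qPoch a q n‖ / ‖qPoch b q n‖ ≤ K / δ :=
    div_le_div₀ (le_trans (norm_nonneg _) (hK 0)) (hK n) hδ (hlow n)
  exact mul_le_mul_of_nonneg_right h1 (pow_nonneg (norm_nonneg t) n)

lemma F_summable (a b t q : ℂ) (K δ : ℝ) (ht : ‖t‖ < 1) (hδ : 0 < δ)
    (hK : ∀ n, ‖qPoch a q n‖ ≤ K) (hlow : ∀ n, δ ≤ ‖qPoch b q n‖) :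
    Summable (fun n : ℕ => qPoch a q n / qPoch b q n * t ^ n) := by
  apply Summable.of_norm_bounded (((summable_geometric_of_lt_one (norm_nonneg t) ht)).mul_left (K/δ))
  exact F_term_bound a b t q K δ hδ hK hlow

lemma F_norm_le (a b t q : ℂ) (K δ : ℝ) (ht : ‖t‖ < 1) (hδ : 0 < δ)
    (hK : ∀ n, ‖qPoch a q n‖ ≤ K) (hlow : ∀ n, δ ≤ ‖qPoch b q n‖) :
    ‖Fq a b t q‖ ≤ (K / δ) * (1 - ‖t‖)⁻¹ := by
  have hs := F_summable a b t q K δ ht hδ hK hlow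
  calc ‖Fq a b t q‖ ≤ ∑' n : ℕ, ‖qPoch a q n / qPoch b q n * t ^ n‖ :=
        norm_tsum_le_tsum_norm hs.norm
    _ ≤ ∑' n : ℕ, (K / δ) * ‖t‖ ^ n := by
        apply Summable.tsum_le_tsum (F_term_bound a b t q K δ hδ hK hlow) hs.norm
        exact (summable_geometric_of_lt_one (norm_nonneg t) ht).mul_left _
    _ = (K / δ) * (1 - ‖t‖)⁻¹ := by
        rw [tsum_mul_left, tsum_geometric_of_lt_one (norm_nonneg t) ht]

lemma FE (a b t q : ℂ)
    (hb1 : ∀ m : ℕ, b * q ^ m ≠ 1)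
    (hs1 : Summable (fun n : ℕ => qPoch a q n / qPoch b q n * t ^ n))
    (hs1q : Summable (fun n : ℕ => qPoch a q n / qPoch b q n * (t*q) ^ n))
    (hs2 : Summable (fun n : ℕ => qPoch (a*q) q n / qPoch (b*q) q n * (t*q) ^ n)) :
    (1 - t) * (1 - b) * Fq a b t q
      = (1 - a*t) * (1 - b) + t * (1 - a) * (b - a*t*q) * Fq (a*q) (b*q) (t*q) q := by
  have hb0 : (1:ℂ) - b ≠ 0 := by
    have := hb1 0; intro h; apply this; rw [pow_zero, mul_one]; rw [sub_eq_zero] at h; exact h.symm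
  have hBne : ∀ n, qPoch b q n ≠ 0 := qPoch_ne_zero b q hb1
  have hb1q : ∀ m : ℕ, (b*q) * q ^ m ≠ 1 := by
    intro m h; exact hb1 (m+1) (by rw [pow_succ]; linear_combination h)
  have hBqne : ∀ n, qPoch (b*q) q n ≠ 0 := qPoch_ne_zero (b*q) q hb1q
  set c : ℕ → ℂ := fun n => qPoch a q n / qPoch b q n with hc
  set f : ℕ → ℂ := fun n => c n * t ^ n with hf
  have hf0 : f 0 = 1 := by simp [hf, hc, qPoch]
  set S : ℂ := Fq a b t q with hS
  have h1 : HasSum f S := hs1.hasSum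
  have h2 : HasSum (fun n => c (n+1) * t ^ (n+1)) (S - 1) := by
    have : HasSum (fun n => f (n+1)) (S - 1) := by
      rw [hasSum_nat_add_iff 1]
      simpa [hf0] using h1
    exact this
  have h3 : HasSum (fun n => c n * t ^ (n+1)) (t * S) := by
    have := h1.mul_left t
    convert this using 2 with n
    · rfl
    · show _ = t * (c _ * t ^ _); ring
  set g : ℕ → ℂ := fun n => a * q ^ n * c n * t ^ (n+1) with hg
  have hgsum : Summable g := by
    have := hs1q.mul_left (a * t)
    apply this.congr
    intro n; simp only [hg, hc]; ring
  set G : ℂ := ∑' n, g n with hG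
  have hgs : HasSum g G := hgsum.hasSum
  have hg0 : g 0 = a * t := by simp [hg, hc, qPoch]
  have h4 : HasSum (fun n => g (n+1)) (G - a * t) := by
    rw [hasSum_nat_add_iff 1]
    simpa [hg0] using hgs
  have h5 : HasSum (fun n => g n - g (n+1)) (a * t) := by
    have := hgs.sub h4
    convert this using 1
    · rfl
    · ring
  have h6 : HasSum (fun n => (c (n+1) * t ^ (n+1) - c n * t ^ (n+1)) + (g n - g (n+1)))
      ((S - 1 - t * S) + a * t) := (h2.sub h3).add h5
  have h7 : ∀ n : ℕ, t * (1-a) * (b - a*t*q) * (qPoch (a*q) q n / qPoch (b*q) q n * (t*q) ^ n)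
      = (1 - b) * ((c (n+1) * t ^ (n+1) - c n * t ^ (n+1)) + (g n - g (n+1))) := by
    intro n
    have fa : (1 - a) * qPoch (a*q) q n = qPoch a q n * (1 - a * q ^ n) := by
      rw [← qPoch_succ', qPoch_succ]
    have fb : (1 - b) * qPoch (b*q) q n = qPoch b q n * (1 - b * q ^ n) := by
      rw [← qPoch_succ', qPoch_succ]
    have hbn : (1:ℂ) - b * q ^ n ≠ 0 := by
      intro h; exact hb1 n (by rw [sub_eq_zero] at h; exact h.symm)
    have hBq' : qPoch (b*q) q n = qPoch b q n * (1 - b * q ^ n) / (1 - b) := by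
      rw [eq_div_iff hb0]; linear_combination fb
    have step1 : t * (1-a) * (b - a*t*q) * (qPoch (a*q) q n / qPoch (b*q) q n * (t*q) ^ n)
        = t * (b - a*t*q) * ((1-a) * qPoch (a*q) q n) / qPoch (b*q) q n * (t*q) ^ n := by
      ring
    rw [step1, fa, hBq']
    simp only [hg, hc, qPoch_succ]
    field_simp [hBne n, hbn, hb0]
    ring
  have h8 : HasSum (fun n => qPoch (a*q) q n / qPoch (b*q) q n * (t*q) ^ n)
      (Fq (a*q) (b*q) (t*q) q) := hs2.hasSum
  have h9 := h8.mul_left (t * (1-a) * (b - a*t*q))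
  have hfun : (fun n => t * (1-a) * (b - a*t*q) * (qPoch (a*q) q n / qPoch (b*q) q n * (t*q) ^ n))
      = fun n => (1 - b) * ((c (n+1) * t ^ (n+1) - c n * t ^ (n+1)) + (g n - g (n+1))) := funext h7
  rw [hfun] at h9
  have hkey : t * (1-a) * (b - a*t*q) * Fq (a*q) (b*q) (t*q) q
      = (1 - b) * ((S - 1 - t * S) + a * t) := h9.unique (h6.mul_left (1-b))
  rw [hkey]
  ring

set_option maxHeartbeats 1000000 in
theorem rogers_fine (a b t q : ℂ) (hq : ‖q‖ < 1) (ht : ‖t‖ < 1) (hb0 : b ≠ 0)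
    (hb : ∀ m : ℕ, b ≠ (q ^ m)⁻¹) (htq : ∀ m : ℕ, t ≠ (q ^ m)⁻¹) :
    ∑' n : ℕ, qPoch a q n / qPoch b q n * t ^ n
      = ∑' n : ℕ, qPoch a q n * qPoch (a * t * q / b) q n * b ^ n * t ^ n
          * q ^ (n ^ 2 - n) * (1 - a * t * q ^ (2 * n))
          / (qPoch b q n * qPoch t q (n + 1)) := by
  have hq0 : (0:ℝ) ≤ ‖q‖ := norm_nonneg q
  have hqN : ∀ N : ℕ, ‖q ^ N‖ ≤ 1 := fun N => by
    rw [norm_pow]; exact pow_le_one₀ hq0 hq.le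
  have hb1 : ∀ m : ℕ, b * q ^ m ≠ 1 := by
    intro m h
    exact hb m (eq_inv_of_mul_eq_one_left h)
  have ht1 : ∀ m : ℕ, t * q ^ m ≠ 1 := by
    intro m h
    exact htq m (eq_inv_of_mul_eq_one_left h)
  have hb1N : ∀ N m : ℕ, (b * q ^ N) * q ^ m ≠ 1 := fun N m h =>
    hb1 (N+m) (by rw [pow_add]; linear_combination h)
  have hshift_norm : ∀ (x : ℂ) (N : ℕ), ‖x * q ^ N‖ ≤ ‖x‖ := fun x N => by
    rw [norm_mul]
    nlinarith [hqN N, norm_nonneg x, norm_nonneg (q^N)]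
  have htN : ∀ N, ‖t * q ^ N‖ < 1 := fun N => lt_of_le_of_lt (hshift_norm t N) ht
  obtain ⟨δb, hδb_pos, hδb⟩ := prod_norm_lower b q hq hb1
  obtain ⟨δt, hδt_pos, hδt⟩ := prod_norm_lower t q hq ht1
  set KA := Real.exp (‖a‖ / (1 - ‖q‖)) with hKA
  set KC := Real.exp (‖a*t*q/b‖ / (1 - ‖q‖)) with hKC
  have hKA_pos : 0 < KA := Real.exp_pos _
  have hKC_pos : 0 < KC := Real.exp_pos _
  have hKA_bound : ∀ (N n : ℕ), ‖qPoch (a * q ^ N) q n‖ ≤ KA := fun N n =>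
    qPoch_norm_le _ q ‖a‖ hq (hshift_norm a N) n
  have hKA0 : ∀ n, ‖qPoch a q n‖ ≤ KA := fun n => by
    have := hKA_bound 0 n; simpa using this
  have hKC_bound : ∀ n, ‖qPoch (a*t*q/b) q n‖ ≤ KC := qPoch_norm_le _ q _ hq le_rfl
  have hblow : ∀ N n, δb ≤ ‖qPoch (b * q ^ N) q n‖ := qPoch_shift_norm_lower b q δb hδb
  have htlow : ∀ N n, δt ≤ ‖qPoch (t * q ^ N) q n‖ := qPoch_shift_norm_lower t q δt hδt
  have hblow0 : ∀ n, δb ≤ ‖qPoch b q n‖ := fun n => by have := hblow 0 n; simpa using this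
  have htlow0 : ∀ n, δt ≤ ‖qPoch t q n‖ := fun n => by have := htlow 0 n; simpa using this
  have h1tqN : ∀ N, δt ≤ ‖1 - t * q ^ N‖ := fun N => by
    have := hδt {N}; simpa using this
  have hαne : ∀ N : ℕ, (1:ℂ) - t * q ^ N ≠ 0 := fun N h =>
    (ht1 N) (by rw [sub_eq_zero] at h; exact h.symm)
  have hβne : ∀ N : ℕ, (1:ℂ) - b * q ^ N ≠ 0 := fun N h =>
    (hb1 N) (by rw [sub_eq_zero] at h; exact h.symm)
  have hBne : ∀ n, qPoch b q n ≠ 0 := qPoch_ne_zero b q hb1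
  have hDne : ∀ n, qPoch t q n ≠ 0 := qPoch_ne_zero t q ht1
  have e1 : ∀ N : ℕ, a * q ^ N * q = a * q ^ (N+1) := fun N => by rw [pow_succ, mul_assoc]
  have e2 : ∀ N : ℕ, b * q ^ N * q = b * q ^ (N+1) := fun N => by rw [pow_succ, mul_assoc]
  have e3 : ∀ N : ℕ, t * q ^ N * q = t * q ^ (N+1) := fun N => by rw [pow_succ, mul_assoc]
  set T : ℕ → ℂ := fun n => qPoch a q n * qPoch (a * t * q / b) q n * b ^ n * t ^ n
      * q ^ (n ^ 2 - n) * (1 - a * t * q ^ (2 * n))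
      / (qPoch b q n * qPoch t q (n + 1)) with hTdef
  set P : ℕ → ℂ := fun N => qPoch a q N * qPoch (a * t * q / b) q N * b ^ N * t ^ N
      * q ^ (N ^ 2 - N) / (qPoch b q N * qPoch t q N) with hPdef
  -- the recurrence step
  have hstep : ∀ N : ℕ, P N * Fq (a*q^N) (b*q^N) (t*q^N) q
      = T N + P (N+1) * Fq (a*q^(N+1)) (b*q^(N+1)) (t*q^(N+1)) q := by
    intro N
    have hs1 : Summable (fun n : ℕ => qPoch (a*q^N) q n / qPoch (b*q^N) q n * (t*q^N) ^ n) :=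
      F_summable _ _ _ _ KA δb (htN N) hδb_pos (hKA_bound N) (hblow N)
    have hs1q : Summable (fun n : ℕ => qPoch (a*q^N) q n / qPoch (b*q^N) q n * ((t*q^N)*q) ^ n) := by
      rw [e3 N]
      exact F_summable _ _ _ _ KA δb (htN (N+1)) hδb_pos (hKA_bound N) (hblow N)
    have hs2 : Summable (fun n : ℕ => qPoch ((a*q^N)*q) q n / qPoch ((b*q^N)*q) q n * ((t*q^N)*q) ^ n) := by
      rw [e1 N, e2 N, e3 N]
      exact F_summable _ _ _ _ KA δb (htN (N+1)) hδb_pos (hKA_bound (N+1)) (hblow (N+1))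
    have hFE := FE (a*q^N) (b*q^N) (t*q^N) q (hb1N N) hs1 hs1q hs2
    rw [e1 N, e2 N, e3 N] at hFE
    have hexp : q^((N+1)^2 - (N+1)) = q^(N^2 - N) * q^(2*N) := by
      rw [← pow_add]
      congr 1
      have h1 : (N+1)^2 = N^2 + 2*N + 1 := by ring
      have h2 : N ≤ N^2 := Nat.le_self_pow two_ne_zero N
      omega
    have hT : T N * (1 - t*q^N) = P N * (1 - a*t*q^(2*N)) := by
      simp only [hTdef, hPdef, qPoch_succ]
      field_simp [hBne N, hDne N, hαne N]
    have hP2 : P (N+1) * ((1 - t*q^N) * (1 - b*q^N))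
        = P N * ((t*q^N) * (1 - a*q^N) * (b*q^N - (a*q^N)*(t*q^N)*q)) := by
      simp only [hPdef]
      rw [hexp]
      simp only [qPoch_succ, pow_succ]
      simp only [div_mul_eq_mul_div]
      rw [div_eq_div_iff (mul_ne_zero (mul_ne_zero (hBne N) (hβne N)) (mul_ne_zero (hDne N) (hαne N))) (mul_ne_zero (hBne N) (hDne N))]
      field_simp
      ring
    apply mul_right_cancel₀ (mul_ne_zero (hαne N) (hβne N))
    linear_combination P N * hFE - (1 - b*q^N) * hT
      - Fq (a*q^(N+1)) (b*q^(N+1)) (t*q^(N+1)) q * hP2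
  -- telescoping
  have hiter : ∀ N : ℕ, Fq a b t q
      = (∑ n ∈ Finset.range N, T n) + P N * Fq (a*q^N) (b*q^N) (t*q^N) q := by
    intro N
    induction N with
    | zero => norm_num [hPdef, qPoch]
    | succ N ih =>
        rw [Finset.sum_range_succ, ih, hstep N]
        ring
  -- uniform bound on shifted F
  have h1t : (0:ℝ) < 1 - ‖t‖ := by linarith
  set M : ℝ := (KA/δb) * (1-‖t‖)⁻¹ with hM
  have hM_pos : 0 < M := mul_pos (div_pos hKA_pos hδb_pos) (inv_pos.2 h1t)
  have hFbound : ∀ N : ℕ, ‖Fq (a*q^N) (b*q^N) (t*q^N) q‖ ≤ M := by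
    intro N
    have h0 := F_norm_le (a*q^N) (b*q^N) (t*q^N) q KA δb (htN N) hδb_pos (hKA_bound N) (hblow N)
    refine h0.trans ?_
    rw [hM]
    have hle : 1 - ‖t‖ ≤ 1 - ‖t*q^N‖ := by
      have := hshift_norm t N; linarith
    have : (1 - ‖t*q^N‖)⁻¹ ≤ (1 - ‖t‖)⁻¹ := by
      apply inv_anti₀ h1t hle
    have hKAδ : (0:ℝ) ≤ KA/δb := (div_pos hKA_pos hδb_pos).le
    exact mul_le_mul_of_nonneg_left this hKAδ
  -- norm bound on P N and T N
  have hee : ∀ N : ℕ, (‖q‖^(N-1))^N = ‖q‖^(N^2-N) := by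
    intro N
    rw [← pow_mul]
    congr 1
    rw [Nat.sub_mul, one_mul, pow_two]
  have hnum_eq : ∀ N : ℕ, ‖b ^ N * t ^ N * q ^ (N^2-N)‖ = (‖b‖*‖t‖*‖q‖^(N-1))^N := by
    intro N
    rw [norm_mul, norm_mul, norm_pow, norm_pow, norm_pow, mul_pow, mul_pow, hee N]
  set C0 : ℝ := KA*KC/(δb*δt) with hC0
  have hC0_pos : 0 < C0 := div_pos (mul_pos hKA_pos hKC_pos) (mul_pos hδb_pos hδt_pos)
  have hPnorm : ∀ N : ℕ, ‖P N‖ ≤ C0 * (‖b‖*‖t‖*‖q‖^(N-1))^N := by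
    intro N
    have hr0 : (0:ℝ) ≤ ‖b‖*‖t‖*‖q‖^(N-1) := by positivity
    calc ‖P N‖ = ‖qPoch a q N‖ * ‖qPoch (a*t*q/b) q N‖ * (‖b‖*‖t‖*‖q‖^(N-1))^N
          / (‖qPoch b q N‖ * ‖qPoch t q N‖) := by
          simp only [hPdef, norm_div, norm_mul, norm_pow]
          rw [mul_pow, mul_pow, hee N]
          ring
      _ ≤ KA * KC * (‖b‖*‖t‖*‖q‖^(N-1))^N / (δb * δt) := by
          gcongr
          · exact hKA0 N
          · exact hKC_bound N
          · exact hblow0 N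
          · exact htlow0 N
      _ = C0 * (‖b‖*‖t‖*‖q‖^(N-1))^N := by rw [hC0]; ring
  have hTnorm : ∀ N : ℕ, ‖T N‖ ≤ (C0 * (1 + ‖a‖*‖t‖)) * (‖b‖*‖t‖*‖q‖^(N-1))^N := by
    intro N
    have hr0 : (0:ℝ) ≤ ‖b‖*‖t‖*‖q‖^(N-1) := by positivity
    have hlast : ‖1 - a*t*q^(2*N)‖ ≤ 1 + ‖a‖*‖t‖ := by
      calc ‖1 - a*t*q^(2*N)‖ ≤ ‖(1:ℂ)‖ + ‖a*t*q^(2*N)‖ := norm_sub_le _ _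
        _ = 1 + ‖a‖*‖t‖*‖q^(2*N)‖ := by rw [norm_one, norm_mul, norm_mul]
        _ ≤ 1 + ‖a‖*‖t‖ := by
            have h1 := hqN (2*N)
            have h2 : (0:ℝ) ≤ ‖a‖*‖t‖ := by positivity
            nlinarith [norm_nonneg (q^(2*N))]
    calc ‖T N‖ = ‖qPoch a q N‖ * ‖qPoch (a*t*q/b) q N‖ * (‖b‖*‖t‖*‖q‖^(N-1))^N
          * ‖1 - a*t*q^(2*N)‖ / (‖qPoch b q N‖ * ‖qPoch t q (N+1)‖) := by
          simp only [hTdef, norm_div, norm_mul, norm_pow]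
          rw [mul_pow, mul_pow, hee N]
          ring
      _ ≤ KA * KC * (‖b‖*‖t‖*‖q‖^(N-1))^N * (1 + ‖a‖*‖t‖) / (δb * δt) := by
          gcongr
          · exact hKA0 N
          · exact hKC_bound N
          · exact hblow0 N
          · exact htlow0 (N+1)
      _ = (C0 * (1 + ‖a‖*‖t‖)) * (‖b‖*‖t‖*‖q‖^(N-1))^N := by
          rw [hC0]; ring
  -- the ratio tends to zero
  have hrtend : Filter.Tendsto (fun N : ℕ => ‖b‖*‖t‖*‖q‖^(N-1)) Filter.atTop (nhds 0) := by
    have t1 : Filter.Tendsto (fun m : ℕ => ‖b‖*‖t‖*‖q‖^m) Filter.atTop (nhds 0) := by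
      have := (tendsto_pow_atTop_nhds_zero_of_lt_one hq0 hq).const_mul (‖b‖*‖t‖)
      simpa [mul_assoc] using this
    exact t1.comp (Filter.tendsto_sub_atTop_nat 1)
  have hr_ev : ∀ᶠ N in Filter.atTop, ‖b‖*‖t‖*‖q‖^(N-1) ≤ 1/2 :=
    hrtend.eventually_le_const (by norm_num)
  -- summability of T
  have hsummT : Summable T := by
    apply Summable.of_norm_bounded_eventually_nat
      (g := fun N => (C0 * (1 + ‖a‖*‖t‖)) * (1/2 : ℝ)^N)
      ((summable_geometric_of_lt_one (by norm_num) (by norm_num)).mul_left _)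
    filter_upwards [hr_ev] with N hN
    refine (hTnorm N).trans ?_
    have hr0 : (0:ℝ) ≤ ‖b‖*‖t‖*‖q‖^(N-1) := by positivity
    have hCpos : (0:ℝ) ≤ C0 * (1 + ‖a‖*‖t‖) := by positivity
    exact mul_le_mul_of_nonneg_left (pow_le_pow_left₀ hr0 hN N) hCpos
  -- decay of the remainder
  have hdecay : Filter.Tendsto (fun N : ℕ => P N * Fq (a*q^N) (b*q^N) (t*q^N) q)
      Filter.atTop (nhds 0) := by
    refine squeeze_zero_norm' (a := fun N : ℕ => (C0 * M) * (1/2 : ℝ)^N) ?_ ?_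
    · filter_upwards [hr_ev] with N hN
      have hr0 : (0:ℝ) ≤ ‖b‖*‖t‖*‖q‖^(N-1) := by positivity
      calc ‖P N * Fq (a*q^N) (b*q^N) (t*q^N) q‖ = ‖P N‖ * ‖Fq (a*q^N) (b*q^N) (t*q^N) q‖ :=
            norm_mul _ _
        _ ≤ (C0 * (‖b‖*‖t‖*‖q‖^(N-1))^N) * M :=
            mul_le_mul (hPnorm N) (hFbound N) (norm_nonneg _)
              (by positivity)
        _ ≤ (C0 * (1/2:ℝ)^N) * M := by
            have h := pow_le_pow_left₀ hr0 hN N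
            exact mul_le_mul_of_nonneg_right (mul_le_mul_of_nonneg_left h hC0_pos.le) hM_pos.le
        _ = (C0 * M) * (1/2:ℝ)^N := by ring
    · have := (tendsto_pow_atTop_nhds_zero_of_lt_one (by norm_num : (0:ℝ) ≤ 1/2)
        (by norm_num : (1/2:ℝ) < 1)).const_mul (C0 * M)
      simpa using this
  -- conclude
  have hps : Filter.Tendsto (fun N : ℕ => ∑ n ∈ Finset.range N, T n)
      Filter.atTop (nhds (Fq a b t q)) := by
    have heq : (fun N : ℕ => ∑ n ∈ Finset.range N, T n)
        = fun N => Fq a b t q - P N * Fq (a*q^N) (b*q^N) (t*q^N) q := by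
      funext N
      rw [hiter N]; ring
    rw [heq]
    simpa using tendsto_const_nhds.sub hdecay
  have hTs := hsummT.hasSum.tendsto_sum_nat
  exact tendsto_nhds_unique hps hTs
end

section
/- For |q|<1 and |t|<1, (1−t) F(a,b;t) = ∑_{n≥0} (b/a;q)_n (−at)^n q^{n(n+1)/2} / ((bq;q)_n (tq;q)_n), where F(a,b;t) := ∑_{n≥0} (aq;q)_n/(bq;q)_n · t^n. -/
noncomputable def F (a b t q : ℂ) : ℂ :=
  ∑' n : ℕ, qPoch (a * q) q n / qPoch (b * q) q n * t ^ n


open Finset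

variable {R : Type*} [CommRing R]

/-- Gaussian binomial coefficient, defined by the Pascal rule
`qb q (M+1) (k+1) = q^(k+1) * qb q M (k+1) + qb q M k`. -/
def qb (q : R) : ℕ → ℕ → R
  | _, 0 => 1
  | 0, _ + 1 => 0
  | M + 1, k + 1 => q ^ (k + 1) * qb q M (k + 1) + qb q M k

@[simp] lemma qb_zero_right (q : R) (n : ℕ) : qb q n 0 = 1 := by cases n <;> rfl

lemma qb_succ_succ (q : R) (M k : ℕ) :
    qb q (M + 1) (k + 1) = q ^ (k + 1) * qb q M (k + 1) + qb q M k := rfl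

lemma qb_eq_zero (q : R) {n k : ℕ} (h : n < k) : qb q n k = 0 := by
  induction n generalizing k with
  | zero => cases k with
    | zero => omega
    | succ k => rfl
  | succ n ih =>
    cases k with
    | zero => omega
    | succ k => rw [qb_succ_succ, ih (by omega), ih (by omega)]; ring

@[simp] lemma qb_self (q : R) (n : ℕ) : qb q n n = 1 := by
  induction n with
  | zero => rfl
  | succ n ih => rw [qb_succ_succ, qb_eq_zero q (by omega), ih]; ring

lemma qb_row_one (q : R) (n : ℕ) : qb q n 1 = ∑ j ∈ range n, q ^ j := by
  induction n with
  | zero => simp [qb]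
  | succ n ih =>
    rw [qb_succ_succ, qb_zero_right, ih, geom_sum_succ, pow_one]

lemma qb_pascal2 (q : R) : ∀ M k : ℕ, k ≤ M →
    qb q (M + 1) (k + 1) = qb q M (k + 1) + q ^ (M - k) * qb q M k := by
  intro M
  induction M with
  | zero => intro k hk; interval_cases k; simp [qb]
  | succ M ih =>
    intro k hk
    cases k with
    | zero =>
      rw [qb_row_one, qb_row_one, qb_zero_right, sum_range_succ]
      simp
    | succ k =>
      have hkM : k ≤ M := by omega
      rcases eq_or_lt_of_le hkM with rfl | hlt
      · rw [qb_eq_zero q (show k + 1 < k + 2 by omega), qb_self,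
          qb_self, Nat.sub_self, pow_zero]
        ring
      · obtain ⟨s, rfl⟩ : ∃ s, M = k + 1 + s := ⟨M - (k + 1), by omega⟩
        conv_lhs => rw [qb_succ_succ, ih (k + 1) (by omega), ih k (by omega)]
        conv_rhs => rw [qb_succ_succ, qb_succ_succ]
        rw [show k + 1 + s - (k + 1) = s by omega,
          show k + 1 + s - k = s + 1 by omega,
          show k + 1 + s + 1 - (k + 1) = s + 1 by omega]
        ring
lemma qb_mul_qpoch (q : R) : ∀ N k : ℕ, k ≤ N →
    (qb q N k * ∏ j ∈ range k, (1 - q ^ (j + 1))) *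
      (∏ j ∈ range (N - k), (1 - q ^ (j + 1))) = ∏ j ∈ range N, (1 - q ^ (j + 1)) := by
  intro N
  induction N with
  | zero => intro k hk; interval_cases k; simp
  | succ N ih =>
    intro k hk
    rcases Nat.lt_or_ge k (N + 1) with hlt | hge
    · cases k with
      | zero => simp
      | succ k' =>
        have hk'N : k' ≤ N := by omega
        rw [qb_succ_succ, add_mul, add_mul]
        have term2 : (qb q N k' * ∏ j ∈ range (k' + 1), (1 - q ^ (j + 1))) *
            (∏ j ∈ range (N + 1 - (k' + 1)), (1 - q ^ (j + 1)))
            = (1 - q ^ (k' + 1)) * ∏ j ∈ range N, (1 - q ^ (j + 1)) := by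
          rw [show N + 1 - (k' + 1) = N - k' by omega, prod_range_succ, ← ih k' hk'N]
          ring
        rcases Nat.lt_or_ge k' N with hlt' | hge'
        · obtain ⟨s, rfl⟩ : ∃ s, N = k' + 1 + s := ⟨N - (k' + 1), by omega⟩
          have term1 : (q ^ (k' + 1) * qb q (k' + 1 + s) (k' + 1) *
              ∏ j ∈ range (k' + 1), (1 - q ^ (j + 1))) *
              (∏ j ∈ range (k' + 1 + s + 1 - (k' + 1)), (1 - q ^ (j + 1)))
              = q ^ (k' + 1) * (1 - q ^ (s + 1)) *
                ∏ j ∈ range (k' + 1 + s), (1 - q ^ (j + 1)) := by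
            rw [show k' + 1 + s + 1 - (k' + 1) = s + 1 by omega,
              prod_range_succ (fun j => 1 - q ^ (j + 1)) s,
              ← ih (k' + 1) (by omega), show k' + 1 + s - (k' + 1) = s by omega]
            ring
          rw [term1, term2, prod_range_succ]
          ring
        · have : k' = N := by omega
          subst this
          rw [qb_eq_zero q (by omega), term2, prod_range_succ]
          ring
    · have : k = N + 1 := by omega
      subst this
      rw [qb_self, Nat.sub_self]
      simp

lemma qb_nonneg {q : ℝ} (hq : 0 ≤ q) : ∀ n k : ℕ, 0 ≤ qb q n k := by
  intro n
  induction n with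
  | zero => intro k; cases k with
    | zero => norm_num [qb]
    | succ k => norm_num [qb]
  | succ n ih =>
    intro k
    cases k with
    | zero => norm_num
    | succ k =>
      rw [qb_succ_succ]
      have := ih (k + 1); have := ih k
      positivity

lemma qb_norm_le (q : ℂ) : ∀ n k : ℕ, ‖qb q n k‖ ≤ qb ‖q‖ n k := by
  intro n
  induction n with
  | zero => intro k; cases k with
    | zero => simp
    | succ k => simp [qb]
  | succ n ih =>
    intro k
    cases k with
    | zero => simp
    | succ k =>
      rw [qb_succ_succ, qb_succ_succ]
      refine le_trans (norm_add_le _ _) (add_le_add ?_ (ih k))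
      rw [norm_mul, norm_pow]
      exact mul_le_mul_of_nonneg_left (ih (k + 1)) (by positivity)
lemma prod_shift_eq (a b q : R) (k : ℕ) :
    (∏ i ∈ range k, (b * q * q ^ (i + 1) - a * q)) =
      q ^ k * ∏ i ∈ range k, (b * q ^ (i + 1) - a) := by
  calc (∏ i ∈ range k, (b * q * q ^ (i + 1) - a * q))
      = ∏ i ∈ range k, q * (b * q ^ (i + 1) - a) :=
        prod_congr rfl fun i _ => by ring
    _ = q ^ k * ∏ i ∈ range k, (b * q ^ (i + 1) - a) := by
        rw [prod_mul_distrib, prod_const, card_range]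

lemma star (q : R) : ∀ (M : ℕ) (a b : R),
    (∑ k ∈ range (M + 1), q ^ (k * (k + 1) / 2) *
        (∏ i ∈ range k, (b * q ^ (i + 1) - a)) * qb q M (M - k) *
        ∏ i ∈ range (M - k), (1 - b * q ^ (k + 2 + i)))
      = ∏ j ∈ range M, (1 - a * q ^ (j + 1)) := by
  intro M
  induction M with
  | zero => intro a b; simp
  | succ M ih =>
    intro a b
    -- abbreviations as functions
    set A : ℕ → R := fun k => q ^ (k * (k + 1) / 2) *
        (∏ i ∈ range k, (b * q ^ (i + 1) - a)) * qb q M (M + 1 - k) *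
        ∏ i ∈ range (M + 1 - k), (1 - b * q ^ (k + 2 + i)) with hA
    set B : ℕ → R := fun k => q ^ (k * (k + 1) / 2) * q ^ k *
        (∏ i ∈ range k, (b * q ^ (i + 1) - a)) * qb q M (M - k) *
        ∏ i ∈ range (M + 1 - k), (1 - b * q ^ (k + 2 + i)) with hB
    have hsplit : ∀ k ∈ range (M + 1),
        q ^ (k * (k + 1) / 2) * (∏ i ∈ range k, (b * q ^ (i + 1) - a)) *
            qb q (M + 1) (M + 1 - k) *
            ∏ i ∈ range (M + 1 - k), (1 - b * q ^ (k + 2 + i))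
          = A k + B k := by
      intro k hk
      have hkM : k ≤ M := by simp at hk; omega
      rw [hA, hB]
      simp only
      rw [show M + 1 - k = (M - k) + 1 by omega,
        qb_pascal2 q M (M - k) (by omega),
        show M - (M - k) = k by omega,
        show M - k + 1 = M + 1 - k by omega]
      ring
    have hlast :
        q ^ ((M + 1) * (M + 1 + 1) / 2) *
            (∏ i ∈ range (M + 1), (b * q ^ (i + 1) - a)) *
            qb q (M + 1) (M + 1 - (M + 1)) *
            ∏ i ∈ range (M + 1 - (M + 1)), (1 - b * q ^ (M + 1 + 2 + i))
          = A (M + 1) := by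
      rw [hA]
      simp [Nat.sub_self]
    calc
      (∑ k ∈ range (M + 1 + 1), q ^ (k * (k + 1) / 2) *
          (∏ i ∈ range k, (b * q ^ (i + 1) - a)) * qb q (M + 1) (M + 1 - k) *
          ∏ i ∈ range (M + 1 - k), (1 - b * q ^ (k + 2 + i)))
        = (∑ k ∈ range (M + 1), (A k + B k)) + A (M + 1) := by
          rw [sum_range_succ, sum_congr rfl hsplit, hlast]
      _ = ((∑ k ∈ range (M + 1), A k) + A (M + 1)) + ∑ k ∈ range (M + 1), B k := by
          rw [sum_add_distrib]; ring
      _ = ((∑ k ∈ range M, A (k + 1)) + A 0 + A (M + 1)) + ∑ k ∈ range (M + 1), B k := by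
          rw [sum_range_succ']
      _ = (∑ k ∈ range (M + 1), A (k + 1)) + ∑ k ∈ range (M + 1), B k := by
          have hA0 : A 0 = 0 := by
            rw [hA]; simp [qb_eq_zero q (show M < M + 1 by omega)]
          rw [hA0, add_zero, ← sum_range_succ (fun k => A (k + 1)) M]
      _ = ∑ k ∈ range (M + 1), (A (k + 1) + B k) := by rw [sum_add_distrib]
      _ = (1 - a * q) * ∑ k ∈ range (M + 1), q ^ (k * (k + 1) / 2) *
            (∏ i ∈ range k, ((b * q) * q ^ (i + 1) - a * q)) * qb q M (M - k) *
            ∏ i ∈ range (M - k), (1 - (b * q) * q ^ (k + 2 + i)) := by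
          rw [mul_sum]
          refine sum_congr rfl fun k hk => ?_
          have hkM : k ≤ M := by simp at hk; omega
          have hT : (k + 1) * (k + 1 + 1) / 2 = k * (k + 1) / 2 + (k + 1) := by
            have h2 : (k + 1) * (k + 1 + 1) = k * (k + 1) + (k + 1) * 2 := by ring
            rw [h2, Nat.add_mul_div_right _ _ (by norm_num : 0 < 2)]
          rw [hA, hB]
          simp only
          rw [hT, pow_add,
            show M + 1 - (k + 1) = M - k by omega,
            prod_range_succ (fun i => b * q ^ (i + 1) - a) k,
            show M + 1 - k = (M - k) + 1 by omega,
            prod_range_succ' (fun i => 1 - b * q ^ (k + 2 + i)) (M - k),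
            prod_shift_eq a b q k]
          have hQ : (∏ i ∈ range (M - k), (1 - b * q ^ (k + 1 + 2 + i))) =
              ∏ i ∈ range (M - k), (1 - b * q * q ^ (k + 2 + i)) := by
            exact prod_congr rfl fun i _ => by ring
          have hQ2 : (∏ i ∈ range (M - k), (1 - b * q ^ (k + 2 + (i + 1)))) =
              ∏ i ∈ range (M - k), (1 - b * q * q ^ (k + 2 + i)) := by
            exact prod_congr rfl fun i _ => by ring
          rw [hQ, hQ2]
          ring
      _ = ∏ j ∈ range (M + 1), (1 - a * q ^ (j + 1)) := by
          rw [ih (a * q) (b * q), prod_range_succ' (fun j => 1 - a * q ^ (j + 1)) M]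
          have hprod : (∏ j ∈ range M, (1 - a * q * q ^ (j + 1))) =
              ∏ j ∈ range M, (1 - a * q ^ (j + 1 + 1)) :=
            prod_congr rfl fun j _ => by ring
          rw [hprod]
          ring

open Finset in
lemma aux_exp_le {x : ℝ} (h0 : 0 ≤ x) (h2 : x ≤ 1/2) : Real.exp (-(2*x)) ≤ 1 - x := by
  have h1 : 2*x + 1 ≤ Real.exp (2*x) := Real.add_one_le_exp (2*x)
  have e1 : Real.exp (-(2*x)) * Real.exp (2*x) = 1 := by
    rw [← Real.exp_add]; norm_num
  have e2 : Real.exp (-(2*x)) * (2*x+1) ≤ 1 := by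
    nlinarith [Real.exp_pos (-(2*x))]
  nlinarith [Real.exp_pos (-(2*x)), mul_nonneg h0 (by linarith : (0:ℝ) ≤ 1-2*x)]

open Finset in
lemma geom_partial_le {r : ℝ} (h0 : 0 ≤ r) (h1 : r < 1) (n : ℕ) :
    ∑ j ∈ range n, r ^ j ≤ (1 - r)⁻¹ := by
  have hs : Summable fun j : ℕ => r ^ j := summable_geometric_of_lt_one h0 h1
  calc ∑ j ∈ range n, r ^ j ≤ ∑' j : ℕ, r ^ j :=
        Summable.sum_le_tsum _ (fun i _ => pow_nonneg h0 i) hs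
    _ = (1 - r)⁻¹ := tsum_geometric_of_lt_one h0 h1

open Finset in
lemma prod_lower_bound {g : ℕ → ℝ} {c r : ℝ} (hc : 0 ≤ c) (h0 : 0 ≤ r) (h1 : r < 1)
    (hgpos : ∀ j, 0 < g j) (hglb : ∀ j, 1 - c * r ^ j ≤ g j) :
    ∃ δ : ℝ, 0 < δ ∧ ∀ n, δ ≤ ∏ j ∈ range n, g j := by
  -- find J with c * r^j ≤ 1/2 for j ≥ J
  obtain ⟨J, hJ⟩ : ∃ J : ℕ, ∀ j, J ≤ j → c * r ^ j ≤ 1/2 := by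
    obtain ⟨J, hJ⟩ := exists_pow_lt_of_lt_one
      (show (0:ℝ) < 1/(2*(c+1)) by positivity) h1
    refine ⟨J, fun j hj => ?_⟩
    have h2 : r ^ j ≤ r ^ J := pow_le_pow_of_le_one h0 h1.le hj
    have h3 : c * r ^ j ≤ c * (1/(2*(c+1))) :=
      mul_le_mul_of_nonneg_left (h2.trans hJ.le) hc
    have h4 : c * (1/(2*(c+1))) ≤ 1/2 := by
      rw [mul_one_div, div_le_div_iff₀ (by positivity) (by norm_num)]
      linarith
    linarith
  set m := (range (J+1)).inf' ⟨0, by simp⟩ (fun n => ∏ j ∈ range n, g j) with hm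
  have hmpos : 0 < m := by
    rw [hm]
    exact (Finset.lt_inf'_iff _).2 fun i _ => prod_pos fun j _ => hgpos j
  have hmle : ∀ n ≤ J, m ≤ ∏ j ∈ range n, g j := fun n hn =>
    Finset.inf'_le _ (by simp; omega)
  set E := Real.exp (-(2 * (c * (1 - r)⁻¹))) with hE
  have hEpos : 0 < E := Real.exp_pos _
  have hE1 : E ≤ 1 := by
    rw [hE, Real.exp_le_one_iff]
    have : 0 ≤ c * (1-r)⁻¹ := mul_nonneg hc (inv_nonneg.mpr (by linarith))
    linarith
  refine ⟨m * E, mul_pos hmpos hEpos, fun n => ?_⟩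
  rcases le_or_gt n J with hn | hn
  · calc m * E ≤ m * 1 := by nlinarith
      _ = m := mul_one m
      _ ≤ ∏ j ∈ range n, g j := hmle n hn
  · rw [← prod_range_mul_prod_Ico g hn.le]
    have h5 : ∏ j ∈ Finset.Ico J n, Real.exp (-(2 * (c * r ^ j))) ≤
        ∏ j ∈ Finset.Ico J n, g j := by
      refine prod_le_prod (fun j _ => (Real.exp_pos _).le) fun j hj => ?_
      have hj' : J ≤ j := (Finset.mem_Ico.mp hj).1
      calc Real.exp (-(2 * (c * r ^ j))) ≤ 1 - c * r ^ j :=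
            aux_exp_le (by positivity) (hJ j hj')
        _ ≤ g j := hglb j
    have h6 : E ≤ ∏ j ∈ Finset.Ico J n, Real.exp (-(2 * (c * r ^ j))) := by
      rw [← Real.exp_sum]
      apply Real.exp_le_exp.mpr
      have hs1 : ∑ j ∈ Finset.Ico J n, -(2 * (c * r ^ j)) =
          -(2 * (c * ∑ j ∈ Finset.Ico J n, r ^ j)) := by
        rw [Finset.mul_sum, Finset.mul_sum, Finset.sum_neg_distrib]
      rw [hs1, neg_le_neg_iff]
      have hs2 : ∑ j ∈ Finset.Ico J n, r ^ j ≤ (1 - r)⁻¹ := by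
        refine le_trans ?_ (geom_partial_le h0 h1 n)
        refine Finset.sum_le_sum_of_subset_of_nonneg ?_ (fun i _ _ => pow_nonneg h0 i)
        rw [Finset.range_eq_Ico]
        exact Finset.Ico_subset_Ico (Nat.zero_le J) le_rfl
      have : 0 ≤ c * ((1-r)⁻¹ - ∑ j ∈ Finset.Ico J n, r ^ j) :=
        mul_nonneg hc (by linarith)
      nlinarith
    calc m * E ≤ (∏ j ∈ range J, g j) * ∏ j ∈ Finset.Ico J n, g j := by
          have := hmle J le_rfl
          have h7 := h6.trans h5
          have h8 : 0 < ∏ j ∈ Finset.Ico J n, g j := prod_pos fun j _ => hgpos j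
          have h9 : 0 < ∏ j ∈ range J, g j := prod_pos fun j _ => hgpos j
          nlinarith
      _ = _ := rfl

open Finset

lemma one_sub_ne_zero_of_norm_lt_one {w : ℂ} (hw : ‖w‖ < 1) : 1 - w ≠ 0 := by
  intro h
  have : (1:ℂ) = w := by linear_combination h
  rw [← this] at hw
  simp at hw

lemma norm_qPoch_eq (c q : ℂ) (n : ℕ) :
    ‖qPoch c q n‖ = ∏ j ∈ range n, ‖1 - c * q ^ j‖ := by
  rw [qPoch, norm_prod]

lemma qPoch_ne_zero_s7 {c q : ℂ} (h : ∀ j, 1 - c * q ^ j ≠ 0) (n : ℕ) :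
    qPoch c q n ≠ 0 :=
  prod_ne_zero_iff.mpr fun j _ => h j

lemma qPoch_norm_lower {c q : ℂ} (hq : ‖q‖ < 1) (h : ∀ j, 1 - c * q ^ j ≠ 0) :
    ∃ δ : ℝ, 0 < δ ∧ ∀ n, δ ≤ ‖qPoch c q n‖ := by
  obtain ⟨δ, hδ, hbnd⟩ := prod_lower_bound (g := fun j => ‖1 - c * q ^ j‖)
    (c := ‖c‖) (r := ‖q‖) (norm_nonneg c) (norm_nonneg q) hq
    (fun j => norm_pos_iff.mpr (h j))
    (fun j => by
      calc 1 - ‖c‖ * ‖q‖ ^ j = ‖(1:ℂ)‖ - ‖c * q ^ j‖ := by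
            rw [norm_mul, norm_pow]; simp
        _ ≤ ‖1 - c * q ^ j‖ := norm_sub_norm_le _ _)
  exact ⟨δ, hδ, fun n => by rw [norm_qPoch_eq]; exact hbnd n⟩

lemma qPoch_norm_upper {c q : ℂ} (hq : ‖q‖ < 1) (n : ℕ) :
    ‖qPoch c q n‖ ≤ Real.exp (‖c‖ * (1 - ‖q‖)⁻¹) := by
  rw [norm_qPoch_eq]
  have step : ∀ j, ‖1 - c * q ^ j‖ ≤ Real.exp (‖c‖ * ‖q‖ ^ j) := by
    intro j
    calc ‖1 - c * q ^ j‖ ≤ ‖(1:ℂ)‖ + ‖c * q ^ j‖ := norm_sub_le _ _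
      _ = ‖c‖ * ‖q‖ ^ j + 1 := by rw [norm_mul, norm_pow]; simp; ring
      _ ≤ Real.exp (‖c‖ * ‖q‖ ^ j) := Real.add_one_le_exp _
  calc ∏ j ∈ range n, ‖1 - c * q ^ j‖
      ≤ ∏ j ∈ range n, Real.exp (‖c‖ * ‖q‖ ^ j) :=
        prod_le_prod (fun j _ => norm_nonneg _) fun j _ => step j
    _ = Real.exp (∑ j ∈ range n, ‖c‖ * ‖q‖ ^ j) := (Real.exp_sum _ _).symm
    _ ≤ Real.exp (‖c‖ * (1 - ‖q‖)⁻¹) := by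
        apply Real.exp_le_exp.mpr
        rw [← mul_sum]
        exact mul_le_mul_of_nonneg_left (geom_partial_le (norm_nonneg q) hq n)
          (norm_nonneg c)

lemma qb_uniform_bound {q : ℂ} (hq : ‖q‖ < 1) :
    ∃ C : ℝ, 1 ≤ C ∧ ∀ N k : ℕ, ‖qb q N k‖ ≤ C := by
  set r := ‖q‖ with hr
  have hr0 : 0 ≤ r := norm_nonneg q
  obtain ⟨δ, hδ, hbnd⟩ := prod_lower_bound (g := fun j => 1 - r ^ (j + 1))
    (c := r) (r := r) hr0 hr0 hq
    (fun j => by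
      have := pow_lt_one₀ hr0 hq (show j + 1 ≠ 0 by omega)
      show (0:ℝ) < 1 - r ^ (j + 1)
      linarith)
    (fun j => by rw [← pow_succ']  )
  have hQ1 : ∀ n, (∏ j ∈ range n, (1 - r ^ (j + 1))) ≤ 1 := by
    intro n
    apply prod_le_one
    · intro j _
      have := pow_lt_one₀ hr0 hq (show j + 1 ≠ 0 by omega)
      nlinarith [pow_nonneg hr0 (j + 1)]
    · intro j _
      nlinarith [pow_nonneg hr0 (j + 1)]
  refine ⟨max 1 (δ⁻¹ * δ⁻¹), le_max_left _ _, fun N k => ?_⟩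
  rcases Nat.lt_or_ge N k with hlt | hge
  · rw [qb_eq_zero q hlt]; simp
  · have h1 : ‖qb q N k‖ ≤ qb r N k := qb_norm_le q N k
    have h2 := qb_mul_qpoch r N k hge
    have h3 := hbnd k
    have h4 := hbnd (N - k)
    have h5 := hQ1 N
    have h6 : 0 ≤ qb r N k := qb_nonneg hr0 N k
    have h7 : qb r N k ≤ δ⁻¹ * δ⁻¹ := by
      have hδ' : 0 < δ⁻¹ := inv_pos.mpr hδ
      have key : qb r N k * (δ * δ) ≤ 1 := by
        calc qb r N k * (δ * δ)
            ≤ qb r N k * ((∏ j ∈ range k, (1 - r ^ (j + 1))) *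
              (∏ j ∈ range (N - k), (1 - r ^ (j + 1)))) := by
              apply mul_le_mul_of_nonneg_left _ h6
              exact mul_le_mul h3 h4 hδ.le (le_trans hδ.le h3)
          _ = ∏ j ∈ range N, (1 - r ^ (j + 1)) := by rw [← h2]; ring
          _ ≤ 1 := h5
      calc qb r N k = qb r N k * (δ * δ) * (δ⁻¹ * δ⁻¹) := by
            field_simp
        _ ≤ 1 * (δ⁻¹ * δ⁻¹) := by
            apply mul_le_mul_of_nonneg_right key (by positivity)
        _ = δ⁻¹ * δ⁻¹ := one_mul _
    exact le_trans (h1.trans h7) (le_max_right _ _)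

/-- Coefficients of the power series of `1/(z;q)_n`. -/
noncomputable def Efun (q : ℂ) : ℕ → ℕ → ℂ
  | 0, 0 => 1
  | 0, _ + 1 => 0
  | n + 1, m => qb q (n + m) m

@[simp] lemma Efun_zero_zero (q : ℂ) : Efun q 0 0 = 1 := rfl
@[simp] lemma Efun_zero_succ (q : ℂ) (m : ℕ) : Efun q 0 (m + 1) = 0 := rfl
lemma Efun_succ (q : ℂ) (n m : ℕ) : Efun q (n + 1) m = qb q (n + m) m := rfl

lemma Efun_zero_right (q : ℂ) (n : ℕ) : Efun q n 0 = 1 := by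
  cases n with
  | zero => rfl
  | succ n => rw [Efun_succ]; simp

lemma Efun_rec (q : ℂ) (n m : ℕ) :
    Efun q (n + 1) (m + 1) = Efun q n (m + 1) + q ^ n * Efun q (n + 1) m := by
  cases n with
  | zero =>
    rw [Efun_succ, Efun_succ, Efun_zero_succ]
    simp [show 0 + (m + 1) = m + 1 by omega, show 0 + m = m by omega]
  | succ n =>
    rw [Efun_succ, Efun_succ, Efun_succ,
      show n + 1 + (m + 1) = (n + 1 + m) + 1 by omega,
      qb_pascal2 q (n + 1 + m) m (by omega),
      show n + 1 + m - m = n + 1 by omega,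
      show n + (m + 1) = n + 1 + m by omega]

lemma Efun_norm_le {q : ℂ} {C : ℝ} (hC : 1 ≤ C) (hqb : ∀ N k : ℕ, ‖qb q N k‖ ≤ C)
    (n m : ℕ) : ‖Efun q n m‖ ≤ C := by
  cases n with
  | zero => cases m with
    | zero => simpa using hC
    | succ m => simp [Efun_zero_succ]; linarith
  | succ n => rw [Efun_succ]; exact hqb _ _

lemma hasSum_Efun {q z : ℂ} (hq : ‖q‖ < 1) (hz : ‖z‖ < 1) (n : ℕ) :
    HasSum (fun m => Efun q n m * z ^ m) (qPoch z q n)⁻¹ := by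
  have hzq : ∀ j : ℕ, ‖z * q ^ j‖ < 1 := by
    intro j
    rw [norm_mul, norm_pow]
    calc ‖z‖ * ‖q‖ ^ j ≤ ‖z‖ * 1 := by
          apply mul_le_mul_of_nonneg_left _ (norm_nonneg z)
          exact pow_le_one₀ (norm_nonneg q) hq.le
      _ = ‖z‖ := mul_one _
      _ < 1 := hz
  have hne : ∀ j : ℕ, 1 - z * q ^ j ≠ 0 := fun j =>
    one_sub_ne_zero_of_norm_lt_one (hzq j)
  obtain ⟨C, hC1, hqb⟩ := qb_uniform_bound hq
  induction n with
  | zero =>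
    have h0 : HasSum (fun m => Efun q 0 m * z ^ m) (Efun q 0 0 * z ^ 0) := by
      apply hasSum_single
      intro m hm
      cases m with
      | zero => omega
      | succ m => simp
    simpa [qPoch] using h0
  | succ n ih =>
    have hsummable : Summable (fun m => Efun q (n + 1) m * z ^ m) := by
      apply Summable.of_norm_bounded (g := fun m => C * ‖z‖ ^ m)
      · exact (summable_geometric_of_lt_one (norm_nonneg z) hz).mul_left C
      · intro m
        rw [norm_mul, norm_pow]
        exact mul_le_mul_of_nonneg_right (Efun_norm_le hC1 hqb _ _)
          (by positivity)
    set S := ∑' m, Efun q (n + 1) m * z ^ m with hSdef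
    have hS : HasSum (fun m => Efun q (n + 1) m * z ^ m) S := hsummable.hasSum
    have h1 : HasSum (fun m => Efun q (n + 1) m * z ^ m * (z * q ^ n))
        (S * (z * q ^ n)) := hS.mul_right _
    set gsh : ℕ → ℂ := fun m => match m with
      | 0 => 0
      | m + 1 => Efun q (n + 1) m * z ^ m * (z * q ^ n) with hgsh
    have h2 : HasSum gsh (S * (z * q ^ n)) := by
      have hh : HasSum (fun m => gsh (m + 1)) (S * (z * q ^ n)) := h1
      have := (hasSum_nat_add_iff (f := gsh) 1).mp hh
      simpa [hgsh] using this
    have h3 : HasSum (fun m => Efun q (n + 1) m * z ^ m - gsh m)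
        (S - S * (z * q ^ n)) := hS.sub h2
    have h4 : (fun m => Efun q (n + 1) m * z ^ m - gsh m)
        = fun m => Efun q n m * z ^ m := by
      funext m
      cases m with
      | zero =>
        simp only [hgsh]
        rw [Efun_zero_right, Efun_zero_right]
        simp
      | succ m =>
        simp only [hgsh]
        rw [Efun_rec]
        ring
    rw [h4] at h3
    have h6 : S - S * (z * q ^ n) = (qPoch z q n)⁻¹ := h3.unique ih
    have hq1 : qPoch z q (n + 1) = qPoch z q n * (1 - z * q ^ n) := by
      rw [qPoch, qPoch, prod_range_succ]
    have hP : qPoch z q n ≠ 0 := qPoch_ne_zero_s7 hne n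
    have h6' : S * (1 - z * q ^ n) * qPoch z q n = 1 := by
      calc S * (1 - z * q ^ n) * qPoch z q n
          = (S - S * (z * q ^ n)) * qPoch z q n := by ring
        _ = (qPoch z q n)⁻¹ * qPoch z q n := by rw [h6]
        _ = 1 := inv_mul_cancel₀ hP
    have h8 : qPoch z q (n + 1) * S = 1 := by
      rw [hq1]; linear_combination h6'
    have h7 : S = (qPoch z q (n + 1))⁻¹ := eq_inv_of_mul_eq_one_right h8
    rw [← h7]
    exact hS

lemma Tsucc (k : ℕ) : (k + 1) * (k + 1 + 1) / 2 = k * (k + 1) / 2 + (k + 1) := by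
  have h2 : (k + 1) * (k + 1 + 1) = k * (k + 1) + (k + 1) * 2 := by ring
  rw [h2, Nat.add_mul_div_right _ _ (by norm_num : 0 < 2)]

lemma qPoch_neg_a {a : ℂ} (b q : ℂ) (ha : a ≠ 0) (n : ℕ) :
    qPoch (b / a) q n * (-a) ^ n = ∏ j ∈ range n, (b * q ^ j - a) := by
  calc qPoch (b / a) q n * (-a) ^ n
      = ∏ j ∈ range n, ((1 - b / a * q ^ j) * (-a)) := by
        rw [prod_mul_distrib, prod_const, card_range, qPoch]
    _ = ∏ j ∈ range n, (b * q ^ j - a) := by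
        refine prod_congr rfl fun j _ => ?_
        field_simp
        ring

lemma Pb_split (b q : ℂ) (k M : ℕ) (hk : k ≤ M) :
    qPoch (b * q) q (M + 1) =
      qPoch (b * q) q (k + 1) * ∏ i ∈ range (M - k), (1 - b * q ^ (k + 2 + i)) := by
  rw [qPoch, qPoch, ← prod_range_mul_prod_Ico _ (show k + 1 ≤ M + 1 by omega),
    Finset.prod_Ico_eq_prod_range, show M + 1 - (k + 1) = M - k by omega]
  congr 1
  exact prod_congr rfl fun i _ => by ring

noncomputable def Dc (a b q : ℂ) : ℕ → ℂ
  | 0 => 1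
  | N + 1 => qPoch (a * q) q (N + 1) / qPoch (b * q) q (N + 1)
      - qPoch (a * q) q N / qPoch (b * q) q N

lemma D_diff (a b q : ℂ) (hbq : ∀ j : ℕ, 1 - b * q * q ^ j ≠ 0) (M : ℕ) :
    Dc a b q (M + 1)
      = (b - a) * q ^ (M + 1) * (∏ j ∈ range M, (1 - a * q ^ (j + 1)))
          / qPoch (b * q) q (M + 1) := by
  have hPbM : qPoch (b * q) q M ≠ 0 := qPoch_ne_zero_s7 hbq M
  have hfac : (1 : ℂ) - b * q * q ^ M ≠ 0 := hbq M
  have hsb : qPoch (b * q) q (M + 1) = qPoch (b * q) q M * (1 - b * q * q ^ M) := by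
    rw [qPoch, qPoch, prod_range_succ]
  have hsa : qPoch (a * q) q (M + 1) = qPoch (a * q) q M * (1 - a * q * q ^ M) := by
    rw [qPoch, qPoch, prod_range_succ]
  have hPa : qPoch (a * q) q M = ∏ j ∈ range M, (1 - a * q ^ (j + 1)) := by
    rw [qPoch]; exact prod_congr rfl fun j _ => by ring
  rw [Dc, hsb, hsa, hPa]
  rw [div_sub_div _ _ (mul_ne_zero hPbM hfac) hPbM,
    div_eq_div_iff (mul_ne_zero (mul_ne_zero hPbM hfac) hPbM) (mul_ne_zero hPbM hfac)]
  ring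

lemma claimA (a b t q : ℂ) (ha : a ≠ 0)
    (hbq : ∀ j : ℕ, 1 - b * q * q ^ j ≠ 0) (N : ℕ) :
    ∑ k ∈ range (N + 1),
      qPoch (b / a) q k * (-(a * t)) ^ k * q ^ (k * (k + 1) / 2) / qPoch (b * q) q k *
        (Efun q k (N - k) * (t * q) ^ (N - k))
      = Dc a b q N * t ^ N := by
  cases N with
  | zero => simp [qPoch, Dc]
  | succ M =>
    rw [Finset.sum_range_succ']
    have hf0 : qPoch (b / a) q 0 * (-(a * t)) ^ 0 * q ^ (0 * (0 + 1) / 2) /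
        qPoch (b * q) q 0 * (Efun q 0 (M + 1 - 0) * (t * q) ^ (M + 1 - 0)) = 0 := by
      rw [show M + 1 - 0 = M + 1 by omega, Efun_zero_succ]
      ring
    rw [hf0, add_zero]
    have hPbM1 : qPoch (b * q) q (M + 1) ≠ 0 := qPoch_ne_zero_s7 hbq (M + 1)
    have key : ∀ k ∈ range (M + 1),
        qPoch (b / a) q (k + 1) * (-(a * t)) ^ (k + 1) *
            q ^ ((k + 1) * (k + 1 + 1) / 2) / qPoch (b * q) q (k + 1) *
            (Efun q (k + 1) (M + 1 - (k + 1)) * (t * q) ^ (M + 1 - (k + 1)))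
          = (b - a) * q ^ (M + 1) * t ^ (M + 1) / qPoch (b * q) q (M + 1) *
            (q ^ (k * (k + 1) / 2) * (∏ i ∈ range k, (b * q ^ (i + 1) - a)) *
              qb q M (M - k) * ∏ i ∈ range (M - k), (1 - b * q ^ (k + 2 + i))) := by
      intro k hk
      have hkM : k ≤ M := by simp at hk; omega
      obtain ⟨sdiff, rfl⟩ : ∃ sdiff, M = k + sdiff := ⟨M - k, by omega⟩
      rw [show k + sdiff - k = sdiff by omega,
        show k + sdiff + 1 - (k + 1) = sdiff by omega]
      have hPbk1 : qPoch (b * q) q (k + 1) ≠ 0 := qPoch_ne_zero_s7 hbq (k + 1)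
      have hQne : (∏ i ∈ range sdiff, (1 - b * q ^ (k + 2 + i))) ≠ 0 := by
        refine prod_ne_zero_iff.mpr fun i _ => ?_
        have h1 := hbq (k + 1 + i)
        rw [show (1:ℂ) - b * q ^ (k + 2 + i) = 1 - b * q * q ^ (k + 1 + i) by ring]
        exact h1
      have hApow : ((-a) : ℂ) ^ (k + 1) ≠ 0 := pow_ne_zero _ (neg_ne_zero.mpr ha)
      have hXdiv : qPoch (b / a) q (k + 1) =
          ((∏ i ∈ range k, (b * q ^ (i + 1) - a)) * (b - a)) / (-a) ^ (k + 1) := by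
        rw [eq_div_iff hApow, qPoch_neg_a b q ha,
          Finset.prod_range_succ' (fun j => b * q ^ j - a) k]
        simp
      have hneg : (-(a * t) : ℂ) ^ (k + 1) = (-a) ^ (k + 1) * t ^ (k + 1) := by
        rw [show (-(a * t) : ℂ) = (-a) * t by ring, mul_pow]
      have hE : Efun q (k + 1) sdiff = qb q (k + sdiff) sdiff := Efun_succ q k sdiff
      have hT : (q : ℂ) ^ ((k + 1) * (k + 1 + 1) / 2) =
          q ^ (k * (k + 1) / 2) * q ^ (k + 1) := by
        rw [Tsucc k, pow_add]
      have hsplit := Pb_split b q k (k + sdiff) (by omega)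
      rw [show k + sdiff - k = sdiff by omega] at hsplit
      rw [hXdiv, hneg, hE, hT, mul_pow t q sdiff, hsplit,
        show (k + sdiff) = k + sdiff by rfl]
      generalize hA : ((-a) : ℂ) ^ (k + 1) = A at hApow ⊢
      field_simp
      ring
    rw [Finset.sum_congr rfl key, ← Finset.mul_sum, star q M a b,
      D_diff a b q hbq M]
    ring

theorem fine_12_2 (a b t q : ℂ) (hq : ‖q‖ < 1) (ht : ‖t‖ < 1) (ha : a ≠ 0)
    (hb : ∀ m : ℕ, b ≠ (q ^ (m + 1))⁻¹) :
    (1 - t) * F a b t q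
      = ∑' n : ℕ, qPoch (b / a) q n * (-(a * t)) ^ n * q ^ (n * (n + 1) / 2)
          / (qPoch (b * q) q n * qPoch (t * q) q n) := by
  -- non-vanishing facts
  have hbq : ∀ j : ℕ, 1 - b * q * q ^ j ≠ 0 := by
    intro j h
    have h1 : b * q ^ (j + 1) = 1 := by linear_combination -h
    exact hb j (eq_inv_of_mul_eq_one_left h1)
  have htq1 : ‖t * q‖ < 1 := by
    rw [norm_mul]
    calc ‖t‖ * ‖q‖ ≤ ‖t‖ * 1 := by
          exact mul_le_mul_of_nonneg_left hq.le (norm_nonneg t)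
      _ = ‖t‖ := mul_one _
      _ < 1 := ht
  have htqj : ∀ j : ℕ, 1 - t * q * q ^ j ≠ 0 := by
    intro j
    apply one_sub_ne_zero_of_norm_lt_one
    rw [norm_mul, norm_pow]
    calc ‖t * q‖ * ‖q‖ ^ j ≤ ‖t * q‖ * 1 := by
          exact mul_le_mul_of_nonneg_left (pow_le_one₀ (norm_nonneg q) hq.le)
            (norm_nonneg _)
      _ = ‖t * q‖ := mul_one _
      _ < 1 := htq1
  obtain ⟨δ, hδ0, hδ⟩ := qPoch_norm_lower (c := b * q) hq hbq
  obtain ⟨C, hC1, hqbC⟩ := qb_uniform_bound hq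
  set Ka := Real.exp (‖a * q‖ * (1 - ‖q‖)⁻¹) with hKa
  set Kc := Real.exp (‖b / a‖ * (1 - ‖q‖)⁻¹) with hKc
  have hKa0 : 0 < Ka := Real.exp_pos _
  have hKc0 : 0 < Kc := Real.exp_pos _
  -- the `F` series
  have hdbound : ∀ n : ℕ, ‖qPoch (a * q) q n / qPoch (b * q) q n‖ ≤ Ka / δ := by
    intro n
    rw [norm_div]
    apply div_le_div₀ (le_of_lt hKa0) (qPoch_norm_upper hq n) hδ0 (hδ n)
  have hFsum : Summable (fun n : ℕ => qPoch (a * q) q n / qPoch (b * q) q n * t ^ n) := by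
    apply Summable.of_norm_bounded (g := fun n => (Ka / δ) * ‖t‖ ^ n)
    · exact (summable_geometric_of_lt_one (norm_nonneg t) ht).mul_left _
    · intro n
      rw [norm_mul, norm_pow]
      exact mul_le_mul_of_nonneg_right (hdbound n) (by positivity)
  have hF : HasSum (fun n : ℕ => qPoch (a * q) q n / qPoch (b * q) q n * t ^ n)
      (F a b t q) := hFsum.hasSum
  -- the D series sums to (1-t) * F
  have hF1 : HasSum (fun n : ℕ =>
      qPoch (a * q) q n / qPoch (b * q) q n * t ^ n * t) (F a b t q * t) :=
    hF.mul_right t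
  set gsh : ℕ → ℂ := fun N => match N with
    | 0 => 0
    | N + 1 => qPoch (a * q) q N / qPoch (b * q) q N * t ^ N * t with hgsh
  have h2 : HasSum gsh (F a b t q * t) := by
    have hh : HasSum (fun N => gsh (N + 1)) (F a b t q * t) := hF1
    have := (hasSum_nat_add_iff (f := gsh) 1).mp hh
    simpa [hgsh] using this
  have h3 := hF.sub h2
  have h4 : (fun N => qPoch (a * q) q N / qPoch (b * q) q N * t ^ N - gsh N)
      = fun N => Dc a b q N * t ^ N := by
    funext N
    cases N with
    | zero =>
      simp only [hgsh]
      rw [show Dc a b q 0 = 1 from rfl]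
      simp [qPoch]
    | succ N =>
      simp only [hgsh]
      rw [show Dc a b q (N + 1) = qPoch (a * q) q (N + 1) / qPoch (b * q) q (N + 1)
        - qPoch (a * q) q N / qPoch (b * q) q N from rfl]
      ring
  rw [h4] at h3
  have hD : HasSum (fun N => Dc a b q N * t ^ N) ((1 - t) * F a b t q) := by
    have : F a b t q - F a b t q * t = (1 - t) * F a b t q := by ring
    rwa [this] at h3
  -- the double-series
  set g : ℕ × ℕ → ℂ := fun p =>
    qPoch (b / a) q p.1 * (-(a * t)) ^ p.1 * q ^ (p.1 * (p.1 + 1) / 2) /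
      qPoch (b * q) q p.1 * (Efun q p.1 p.2 * (t * q) ^ p.2) with hgdef
  have hc'bound : ∀ n : ℕ,
      ‖qPoch (b / a) q n * (-(a * t)) ^ n * q ^ (n * (n + 1) / 2) /
        qPoch (b * q) q n‖ ≤
      Kc / δ * ((‖a‖ * ‖t‖) ^ n * ‖q‖ ^ (n * (n + 1) / 2)) := by
    intro n
    rw [norm_div, norm_mul, norm_mul, norm_pow, norm_pow, norm_neg, norm_mul]
    have h1 : ‖qPoch (b / a) q n‖ * (‖a‖ * ‖t‖) ^ n * ‖q‖ ^ (n * (n + 1) / 2) ≤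
        Kc * ((‖a‖ * ‖t‖) ^ n * ‖q‖ ^ (n * (n + 1) / 2)) := by
      rw [← mul_assoc]
      apply mul_le_mul_of_nonneg_right _ (by positivity)
      apply mul_le_mul_of_nonneg_right (qPoch_norm_upper hq n) (by positivity)
    calc ‖qPoch (b / a) q n‖ * (‖a‖ * ‖t‖) ^ n * ‖q‖ ^ (n * (n + 1) / 2) /
          ‖qPoch (b * q) q n‖
        ≤ Kc * ((‖a‖ * ‖t‖) ^ n * ‖q‖ ^ (n * (n + 1) / 2)) / δ := by
          apply div_le_div₀ (by positivity) h1 hδ0 (hδ n)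
      _ = Kc / δ * ((‖a‖ * ‖t‖) ^ n * ‖q‖ ^ (n * (n + 1) / 2)) := by ring
  -- summability of W
  have hW : Summable (fun n : ℕ => (‖a‖ * ‖t‖) ^ n * ‖q‖ ^ (n * (n + 1) / 2)) := by
    apply summable_of_ratio_norm_eventually_le (r := 1/2) (by norm_num)
    have htend : Filter.Tendsto (fun n : ℕ => ‖a‖ * ‖t‖ * ‖q‖ ^ (n + 1))
        Filter.atTop (nhds 0) := by
      have h0 : Filter.Tendsto (fun n : ℕ => ‖q‖ ^ (n + 1)) Filter.atTop (nhds 0) :=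
        (tendsto_pow_atTop_nhds_zero_of_lt_one (norm_nonneg q) hq).comp
          (Filter.tendsto_add_atTop_nat 1)
      simpa using h0.const_mul (‖a‖ * ‖t‖)
    filter_upwards [htend.eventually_le_const (show (0:ℝ) < 1/2 by norm_num)] with n hn
    have hWn : (0:ℝ) ≤ (‖a‖ * ‖t‖) ^ n * ‖q‖ ^ (n * (n + 1) / 2) := by positivity
    have hstep : (‖a‖ * ‖t‖) ^ (n + 1) * ‖q‖ ^ ((n + 1) * (n + 1 + 1) / 2)
        = ((‖a‖ * ‖t‖) ^ n * ‖q‖ ^ (n * (n + 1) / 2)) * (‖a‖ * ‖t‖ * ‖q‖ ^ (n + 1)) := by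
      rw [Tsucc n, pow_add, pow_succ]
      ring
    rw [Real.norm_of_nonneg (by positivity), Real.norm_of_nonneg hWn, hstep]
    calc ((‖a‖ * ‖t‖) ^ n * ‖q‖ ^ (n * (n + 1) / 2)) * (‖a‖ * ‖t‖ * ‖q‖ ^ (n + 1))
        ≤ ((‖a‖ * ‖t‖) ^ n * ‖q‖ ^ (n * (n + 1) / 2)) * (1/2) :=
          mul_le_mul_of_nonneg_left hn hWn
      _ = 1/2 * ((‖a‖ * ‖t‖) ^ n * ‖q‖ ^ (n * (n + 1) / 2)) := by ring
  -- norm bound on g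
  have hgnormle : ∀ p : ℕ × ℕ, ‖g p‖ ≤
      (Kc / δ * ((‖a‖ * ‖t‖) ^ p.1 * ‖q‖ ^ (p.1 * (p.1 + 1) / 2))) * (C * ‖t * q‖ ^ p.2) := by
    intro p
    rw [hgdef]
    simp only
    rw [norm_mul (a := qPoch (b / a) q p.1 * (-(a * t)) ^ p.1 * q ^ (p.1 * (p.1 + 1) / 2) /
      qPoch (b * q) q p.1), norm_mul (a := Efun q p.1 p.2), norm_pow]
    apply mul_le_mul (hc'bound p.1) _ (by positivity) (by positivity)
    exact mul_le_mul_of_nonneg_right (Efun_norm_le hC1 hqbC p.1 p.2) (by positivity)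
  have hgnorm : Summable (fun p : ℕ × ℕ => ‖g p‖) := by
    apply Summable.of_nonneg_of_le (fun p => norm_nonneg _) hgnormle
    exact Summable.mul_of_nonneg
      (f := fun n : ℕ => Kc / δ * ((‖a‖ * ‖t‖) ^ n * ‖q‖ ^ (n * (n + 1) / 2)))
      (g := fun m : ℕ => C * ‖t * q‖ ^ m)
      (hW.mul_left _)
      ((summable_geometric_of_lt_one (norm_nonneg _) htq1).mul_left C)
      (fun n => by positivity) (fun m => by positivity)
  have hg : Summable g := hgnorm.of_norm
  have hGsum : HasSum g (∑' p, g p) := hg.hasSum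
  -- rows
  have hrow : ∀ n : ℕ, HasSum (fun m => g (n, m))
      (qPoch (b / a) q n * (-(a * t)) ^ n * q ^ (n * (n + 1) / 2) /
        (qPoch (b * q) q n * qPoch (t * q) q n)) := by
    intro n
    have h1 := (hasSum_Efun hq htq1 n).mul_left
      (qPoch (b / a) q n * (-(a * t)) ^ n * q ^ (n * (n + 1) / 2) / qPoch (b * q) q n)
    have h2 : qPoch (b / a) q n * (-(a * t)) ^ n * q ^ (n * (n + 1) / 2) /
        qPoch (b * q) q n * (qPoch (t * q) q n)⁻¹
        = qPoch (b / a) q n * (-(a * t)) ^ n * q ^ (n * (n + 1) / 2) /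
          (qPoch (b * q) q n * qPoch (t * q) q n) := by
      rw [← div_eq_mul_inv, div_div]
    rw [h2] at h1
    exact h1
  have hRHS : HasSum (fun n : ℕ =>
      qPoch (b / a) q n * (-(a * t)) ^ n * q ^ (n * (n + 1) / 2) /
        (qPoch (b * q) q n * qPoch (t * q) q n)) (∑' p, g p) :=
    hGsum.prod_fiberwise hrow
  -- antidiagonal regrouping
  have hAnti : HasSum (fun N => ∑ p ∈ Finset.HasAntidiagonal.antidiagonal N, g p) (∑' p, g p) := by
    have he : HasSum (g ∘ Finset.HasAntidiagonal.sigmaAntidiagonalEquivProd)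
        (∑' p, g p) := (Equiv.hasSum_iff _).mpr hGsum
    apply HasSum.sigma he
    intro N
    have hf := hasSum_fintype (fun c : (Finset.HasAntidiagonal.antidiagonal N : Finset (ℕ × ℕ)) => g c)
    rwa [Finset.sum_coe_sort] at hf
  have hDiag : ∀ N, ∑ p ∈ Finset.HasAntidiagonal.antidiagonal N, g p = Dc a b q N * t ^ N := by
    intro N
    rw [Finset.Nat.sum_antidiagonal_eq_sum_range_succ_mk]
    exact claimA a b t q ha hbq N
  rw [funext hDiag] at hAnti
  have hfinal : (1 - t) * F a b t q = ∑' p, g p := hD.unique hAnti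
  rw [hfinal, ← hRHS.tsum_eq]
end
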